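/- Let q > 0 be real and let t₁, t₂ be coprime integers. Let H_q(k), for k ∈ ℝ², be the 2×2 complex matrix with entries H₁₁ = 3+q, H₁₂ = −1−e^{ik₁}−e^{ik₂}, H₂₁ = −1−e^{−ik₁}−e^{−ik₂}, H₂₂ = 3−q. Then ⋃ { spectrum(H_q(k)) : k ∈ ℝ², t₁k₁ + t₂k₂ ∈ 2πℤ } = [3−√(9+q²), 3−q] ∪ [3+q, 3+√(9+q²)] if and only if t₁ − t₂ is divisible by 3. Moreover, for arbitrary integers t₁, t₂ (not necessarily coprime): there exists k ∈ ℝ² with 1 + e^{ik₁} + e^{ik₂} = 0 and t₁k₁ + t₂k₂ ∈ 2πℤ if and only if 3 divides t₁ − t₂. -/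

import Mathlib

/-!
The spectrum of `H_q(k)` is `{3 ± √(q² + |s(k)|²)}` with `s(k) = 1 + e^{ik₁} + e^{ik₂}`, and
`|s|² ∈ [0, 9]`, with `|s| = 3` on `2πℤ²`. So the inner band edges `3 ± q` are reached iff some
quasimomentum is a zero of `s`. At a zero, `u = e^{ik₁}` satisfies `u² + u + 1 = 0` and
`e^{ik₂} = u²`, so `e^{i(t₁k₁ + t₂k₂)} = u^{t₁ + 2t₂} = 1` forces `3 ∣ t₁ - t₂`; conversely
`(2π/3, -2π/3)` is a zero. If moreover `t₁, t₂` are coprime, then `t₂² ≡ t₁t₂ ≡ 1 (mod 3)`, so the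
line of quasimomenta `σ (t₂, -t₁)` runs from `0` to a zero of `s` at `σ = 2πt₂/3`, and by the
intermediate value theorem `|s|²` takes every value of `[0, 9]` on it.
-/

open scoped Real

/-- The Floquet matrix of the Schrödinger operator on the hexagonal lattice with
potential `±q` on the two fundamental vertices. -/
noncomputable def hexFloquet (q k₁ k₂ : ℝ) : Matrix (Fin 2) (Fin 2) ℂ :=
  !![((3 + q : ℝ) : ℂ), -1 - Complex.exp (Complex.I * k₁) - Complex.exp (Complex.I * k₂);
     -1 - Complex.exp (-(Complex.I * k₁)) - Complex.exp (-(Complex.I * k₂)), ((3 - q : ℝ) : ℂ)]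

open Complex ComplexConjugate

theorem Matrix.mem_spectrum_fin_two_iff {K : Type*} [Field K] (A : Matrix (Fin 2) (Fin 2) K)
    (z : K) : z ∈ spectrum K A ↔ (z - A 0 0) * (z - A 1 1) - A 0 1 * A 1 0 = 0 := by
  rw [spectrum.mem_iff, Matrix.isUnit_iff_isUnit_det, isUnit_iff_ne_zero, not_not,
    Matrix.det_fin_two]
  simp [Matrix.algebraMap_matrix_apply]

theorem Complex.sq_add_self_add_one_eq_zero_of_norm_eq_one {u v : ℂ} (hu : ‖u‖ = 1)
    (hv : ‖v‖ = 1) (h : 1 + u + v = 0) : u ^ 2 + u + 1 = 0 := by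
  have hconj : 1 + u⁻¹ + v⁻¹ = 0 := by
    rw [inv_eq_conj hu, inv_eq_conj hv, ← map_one (starRingEnd ℂ), ← map_add, ← map_add, h,
      map_zero]
  have hv' : v = -1 - u := by linear_combination h
  have hu0 : u ≠ 0 := by rintro rfl; simp at hu
  have hv0 : -1 - u ≠ 0 := hv' ▸ (by rintro rfl; simp at hv)
  rw [hv'] at hconj
  field_simp at hconj
  linear_combination -hconj

theorem isPrimitiveRoot_three_of_sq_add_self_add_one_eq_zero {R : Type*} [CommRing R]
    [IsDomain R] [CharZero R] {u : R} (h : u ^ 2 + u + 1 = 0) :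
    IsPrimitiveRoot u 3 := by
  rw [← Polynomial.isRoot_cyclotomic_iff_charZero three_pos, Polynomial.cyclotomic_three]
  simpa using h

noncomputable def hexSymbol (k₁ k₂ : ℝ) : ℂ := 1 + exp (I * k₁) + exp (I * k₂)

theorem hexFloquet_eq (q k₁ k₂ : ℝ) :
    hexFloquet q k₁ k₂ = !![((3 + q : ℝ) : ℂ), -hexSymbol k₁ k₂;
      -conj (hexSymbol k₁ k₂), ((3 - q : ℝ) : ℂ)] := by
  simp only [hexFloquet, hexSymbol, map_add, map_one, ← exp_conj, map_mul, conj_I, conj_ofReal,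
    neg_mul, neg_add']

theorem mem_spectrum_hexFloquet_iff (q k₁ k₂ : ℝ) (z : ℂ) :
    z ∈ spectrum ℂ (hexFloquet q k₁ k₂) ↔ (z - 3) ^ 2 = q ^ 2 + normSq (hexSymbol k₁ k₂) := by
  rw [Matrix.mem_spectrum_fin_two_iff, hexFloquet_eq, ← mul_conj]
  simp only [Matrix.of_apply, Matrix.cons_val', Matrix.cons_val_zero, Matrix.cons_val_one,
    Matrix.empty_val', Matrix.cons_val_fin_one, ofReal_add, ofReal_sub, ofReal_ofNat]
  constructor <;> intro h <;> linear_combination h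

theorem spectrum_hexFloquet (q k₁ k₂ : ℝ) :
    spectrum ℂ (hexFloquet q k₁ k₂) =
      ofReal '' {x | (x - 3) ^ 2 = q ^ 2 + normSq (hexSymbol k₁ k₂)} := by
  ext z
  rw [mem_spectrum_hexFloquet_iff]
  constructor
  · intro h
    set r := √(q ^ 2 + normSq (hexSymbol k₁ k₂))
    have hr : r ^ 2 = q ^ 2 + normSq (hexSymbol k₁ k₂) :=
      Real.sq_sqrt (add_nonneg (sq_nonneg q) (normSq_nonneg _))
    have hroots : (z - (3 - r : ℝ)) * (z - (3 + r : ℝ)) = 0 := by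
      have hr' : (r : ℂ) ^ 2 = q ^ 2 + normSq (hexSymbol k₁ k₂) := by exact_mod_cast hr
      push_cast
      linear_combination h - hr'
    rcases mul_eq_zero.1 hroots with hz | hz
    · exact ⟨3 - r, by simp only [Set.mem_ofPred_eq]; linear_combination hr,
        by linear_combination -hz⟩
    · exact ⟨3 + r, by simp only [Set.mem_ofPred_eq]; linear_combination hr,
        by linear_combination -hz⟩
  · rintro ⟨x, hx, rfl⟩
    exact_mod_cast hx

theorem dvd_sub_of_hexSymbol_eq_zero {s₁ s₂ n : ℤ} {k₁ k₂ : ℝ} (h : hexSymbol k₁ k₂ = 0)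
    (hk : (s₁ : ℝ) * k₁ + s₂ * k₂ = 2 * π * n) : (3 : ℤ) ∣ s₁ - s₂ := by
  set u := exp (I * k₁)
  have hquad : u ^ 2 + u + 1 = 0 :=
    sq_add_self_add_one_eq_zero_of_norm_eq_one (norm_exp_I_mul_ofReal k₁)
      (norm_exp_I_mul_ofReal k₂) h
  have hv : exp (I * k₂) = u ^ (2 : ℤ) := by
    have h' : 1 + u + exp (I * k₂) = 0 := h
    rw [zpow_ofNat]; linear_combination h' - hquad
  have hone : u ^ (s₁ + 2 * s₂) = 1 :=
    calc u ^ (s₁ + 2 * s₂) = exp (s₁ * (I * k₁)) * exp (s₂ * (I * k₂)) := by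
          rw [exp_int_mul, exp_int_mul, hv, ← zpow_mul, ← zpow_add₀ (exp_ne_zero _)]
      _ = exp (n * (2 * π * I)) := by
          have hk' : (s₁ : ℂ) * k₁ + s₂ * k₂ = 2 * π * n := by exact_mod_cast hk
          rw [← exp_add]; congr 1; linear_combination I * hk'
      _ = 1 := exp_int_mul_two_pi_mul_I n
  have h3 := ((isPrimitiveRoot_three_of_sq_add_self_add_one_eq_zero hquad).zpow_eq_one_iff_dvd
    _).1 hone
  omega

theorem hexSymbol_two_pi_div_three : hexSymbol (2 * π / 3) (-(2 * π / 3)) = 0 := by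
  have hcos : Real.cos (2 * π / 3) = -(1 / 2) := by
    rw [show 2 * π / 3 = π - π / 3 by ring, Real.cos_pi_sub, Real.cos_pi_div_three]
  rw [hexSymbol, add_assoc, mul_comm I, mul_comm I, ofReal_neg, ← two_cos, ← ofReal_cos,
    hcos]
  push_cast; ring

theorem exists_hexSymbol_eq_zero_of_dvd {s₁ s₂ : ℤ} (h3 : (3 : ℤ) ∣ s₁ - s₂) :
    ∃ k₁ k₂ : ℝ, hexSymbol k₁ k₂ = 0 ∧ ∃ n : ℤ, (s₁ : ℝ) * k₁ + s₂ * k₂ = 2 * π * n := by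
  obtain ⟨d, hd⟩ := h3
  refine ⟨2 * π / 3, -(2 * π / 3), hexSymbol_two_pi_div_three, d, ?_⟩
  have hd' : (s₁ : ℝ) - s₂ = 3 * d := by exact_mod_cast hd
  linear_combination (2 * π / 3) * hd'

theorem normSq_hexSymbol_le_nine (k₁ k₂ : ℝ) : normSq (hexSymbol k₁ k₂) ≤ 9 := by
  have hnorm : ‖hexSymbol k₁ k₂‖ ≤ 3 :=
    calc ‖hexSymbol k₁ k₂‖ ≤ ‖(1 : ℂ)‖ + ‖exp (I * k₁)‖ + ‖exp (I * k₂)‖ := norm_add₃_le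
      _ = 3 := by rw [norm_one, norm_exp_I_mul_ofReal, norm_exp_I_mul_ofReal]; norm_num
  rw [normSq_eq_norm_sq]
  nlinarith [norm_nonneg (hexSymbol k₁ k₂)]

theorem hexSymbol_add_two_pi_mul (k₁ k₂ : ℝ) (m n : ℤ) :
    hexSymbol (k₁ + 2 * π * m) (k₂ + 2 * π * n) = hexSymbol k₁ k₂ := by
  have hper (k : ℝ) (j : ℤ) : exp (I * ↑(k + 2 * π * j)) = exp (I * k) := by
    rw [← exp_periodic.int_mul j (I * k)]; push_cast; ring_nf
  rw [hexSymbol, hexSymbol, hper, hper]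

theorem Int.three_dvd_sq_sub_one_of_isCoprime {a b : ℤ} (hab : IsCoprime a b)
    (h3 : 3 ∣ a - b) : 3 ∣ b ^ 2 - 1 := by
  have hb : ¬ 3 ∣ b := fun hb ↦
    Int.prime_three.not_isUnit (hab.isUnit_of_dvd' (by simpa using dvd_add h3 hb) hb)
  have := Int.ModEq.pow_card_sub_one_eq_one Nat.prime_three
    ((Int.prime_three.coprime_iff_not_dvd.2 hb).symm)
  exact this.symm.dvd

theorem exists_normSq_hexSymbol_eq {t₁ t₂ : ℤ} (hcop : IsCoprime t₁ t₂) (h3 : 3 ∣ t₁ - t₂)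
    {w : ℝ} (hw₀ : 0 ≤ w) (hw₉ : w ≤ 9) :
    ∃ σ : ℝ, normSq (hexSymbol (σ * t₂) (-(σ * t₁))) = w := by
  set f : ℝ → ℝ := fun σ ↦ normSq (hexSymbol (σ * t₂) (-(σ * t₁)))
  have hf : Continuous f := by unfold f hexSymbol; fun_prop
  have hf₀ : f 0 = 9 := by
    simp only [f, hexSymbol]; norm_num [normSq]
  have hsq := Int.three_dvd_sq_sub_one_of_isCoprime hcop h3
  obtain ⟨b, hb⟩ : 3 ∣ t₁ * t₂ - 1 := by
    rw [show t₁ * t₂ - 1 = (t₂ ^ 2 - 1) + (t₁ - t₂) * t₂ by ring]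
    exact dvd_add hsq (dvd_mul_of_dvd_left h3 t₂)
  obtain ⟨a, ha⟩ := hsq
  have hfK : f (2 * π * t₂ / 3) = 0 := by
    have ha' : (t₂ : ℝ) ^ 2 - 1 = 3 * a := by exact_mod_cast ha
    have hb' : (t₁ : ℝ) * t₂ - 1 = 3 * b := by exact_mod_cast hb
    have e₁ : 2 * π * t₂ / 3 * t₂ = 2 * π / 3 + 2 * π * a := by
      linear_combination (2 * π / 3) * ha'
    have e₂ : -(2 * π * t₂ / 3 * t₁) = -(2 * π / 3) + 2 * π * (-b : ℤ) := by
      push_cast; linear_combination (-(2 * π / 3)) * hb'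
    simp only [f, e₁, e₂, hexSymbol_add_two_pi_mul, hexSymbol_two_pi_div_three, map_zero]
  have hw : w ∈ Set.uIcc (f (2 * π * t₂ / 3)) (f 0) := by
    rw [hfK, hf₀, Set.uIcc_of_le (by norm_num)]; exact ⟨hw₀, hw₉⟩
  obtain ⟨σ, -, hσ⟩ := intermediate_value_uIcc hf.continuousOn hw
  exact ⟨σ, hσ⟩

theorem mem_Icc_union_Icc_iff {a b c x : ℝ} (ha : 0 ≤ a) :
    x ∈ Set.Icc (c - b) (c - a) ∪ Set.Icc (c + a) (c + b) ↔ a ≤ |x - c| ∧ |x - c| ≤ b := by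
  simp only [Set.mem_union, Set.mem_Icc]
  rcases le_total 0 (x - c) with hx | hx
  · rw [abs_of_nonneg hx]
    constructor
    · rintro (⟨h₁, h₂⟩ | ⟨h₁, h₂⟩) <;> constructor <;> linarith
    · rintro ⟨h₁, h₂⟩; right; constructor <;> linarith
  · rw [abs_of_nonpos hx]
    constructor
    · rintro (⟨h₁, h₂⟩ | ⟨h₁, h₂⟩) <;> constructor <;> linarith
    · rintro ⟨h₁, h₂⟩; left; constructor <;> linarith

theorem mem_hexBands_iff {q : ℝ} (hq : 0 ≤ q) (x : ℝ) :
    x ∈ Set.Icc (3 - √(9 + q ^ 2)) (3 - q) ∪ Set.Icc (3 + q) (3 + √(9 + q ^ 2)) ↔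
      q ^ 2 ≤ (x - 3) ^ 2 ∧ (x - 3) ^ 2 ≤ 9 + q ^ 2 := by
  rw [mem_Icc_union_Icc_iff hq, Real.le_sqrt (abs_nonneg _), sq_abs, sq_le_sq, abs_of_nonneg hq]
  positivity

/-- a nanotube with primitive chiral index `(t₁,t₂)` is isospectral to the
hexagonal lattice iff `3 ∣ t₁ − t₂`; moreover, for arbitrary integers `t₁, t₂`, the zero
set of `1+e^{ik₁}+e^{ik₂}` meets `{t₁k₁+t₂k₂ ∈ 2πℤ}` iff `3 ∣ t₁ − t₂`. -/
theorem stmt_12 (q : ℝ) (hq : 0 < q) (t₁ t₂ : ℤ) (hcop : IsCoprime t₁ t₂) :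
    ((⋃ k ∈ {k : ℝ × ℝ | ∃ n : ℤ, (t₁ : ℝ) * k.1 + (t₂ : ℝ) * k.2 = 2*π*n},
        spectrum ℂ (hexFloquet q k.1 k.2)) =
      (fun x : ℝ => (x : ℂ)) ''
        (Set.Icc (3 - Real.sqrt (9 + q^2)) (3 - q) ∪
         Set.Icc (3 + q) (3 + Real.sqrt (9 + q^2))) ↔ (3:ℤ) ∣ t₁ - t₂) ∧
    (∀ s₁ s₂ : ℤ,
      ((∃ k₁ k₂ : ℝ,
          1 + Complex.exp (Complex.I * k₁) + Complex.exp (Complex.I * k₂) = 0 ∧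
          ∃ n : ℤ, (s₁ : ℝ) * k₁ + (s₂ : ℝ) * k₂ = 2*π*n) ↔ (3:ℤ) ∣ s₁ - s₂)) := by
  refine ⟨?_, fun s₁ s₂ ↦ ⟨fun ⟨_, _, h, _, hk⟩ ↦ dvd_sub_of_hexSymbol_eq_zero h hk,
    exists_hexSymbol_eq_zero_of_dvd⟩⟩
  simp_rw [spectrum_hexFloquet, ← Set.image_iUnion₂]
  rw [ofReal_injective.image_injective.eq_iff, Set.ext_iff]
  simp only [Set.mem_iUnion, Set.mem_ofPred_eq, mem_hexBands_iff hq.le, exists_prop]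
  constructor
  · intro h
    obtain ⟨k, ⟨n, hk⟩, hedge⟩ := (h (3 - q)).2 (by constructor <;> nlinarith)
    exact dvd_sub_of_hexSymbol_eq_zero (normSq_eq_zero.1 (by linarith)) hk
  · intro h3 x
    constructor
    · rintro ⟨k, -, hx⟩
      rw [hx]
      exact ⟨by linarith [normSq_nonneg (hexSymbol k.1 k.2)],
        by linarith [normSq_hexSymbol_le_nine k.1 k.2]⟩
    · rintro ⟨h₁, h₂⟩
      obtain ⟨σ, hσ⟩ := exists_normSq_hexSymbol_eq hcop h3 (w := (x - 3) ^ 2 - q ^ 2)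
        (by linarith) (by linarith)
      exact ⟨(σ * t₂, -(σ * t₁)), ⟨0, by push_cast; ring⟩, by rw [hσ]; ring⟩
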